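/- There is a universal constant C > 0 such that the following holds. Let f* be an arbitrary probability density on ℝ, and let s_r be the score function of its r-smoothing f_r. For every δ ∈ (0,1), Pr_{x∼f_r}[ |s_r(x)| > (C/r)·√(log(2/δ)) ] ≤ δ. In particular, the constant C = 2√2 suffices. -/

import Mathlib

open MeasureTheory Real Filter

/-- Density of the Gaussian `N(0, r²)`. -/
noncomputable def gaussDensity (r x : ℝ) : ℝ :=
  (Real.sqrt (2 * Real.pi * r ^ 2))⁻¹ * Real.exp (-x ^ 2 / (2 * r ^ 2))

/-- The `r`-smoothed density `f_r(x) = ∫ f(y) w_r(x − y) dy`. -/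
noncomputable def smoothed (f : ℝ → ℝ) (r x : ℝ) : ℝ :=
  ∫ y, f y * gaussDensity r (x - y)

/-- The score function `s_r(x) = f_r'(x) / f_r(x)` of the smoothed density. -/
noncomputable def score (f : ℝ → ℝ) (r x : ℝ) : ℝ :=
  deriv (smoothed f r) x / smoothed f r x

/-- The `r`-smoothed Fisher information `I_r = E_{x∼f_r}[s_r(x)²]`. -/
noncomputable def fisherInfo (f : ℝ → ℝ) (r : ℝ) : ℝ :=
  ∫ x, smoothed f r x * score f r x ^ 2

/-- The measure on ℝ with density `f` with respect to Lebesgue measure. -/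
noncomputable def densMeasure (f : ℝ → ℝ) : Measure ℝ :=
  MeasureTheory.volume.withDensity fun x => ENNReal.ofReal (f x)

/-- `f` is a probability density on ℝ. -/
def IsDensity (f : ℝ → ℝ) : Prop :=
  (∀ x, 0 ≤ f x) ∧ MeasureTheory.Integrable f ∧ (∫ x, f x) = 1

/-- The density `f` has mean `μ`. -/
def HasMean (f : ℝ → ℝ) (μ : ℝ) : Prop :=
  MeasureTheory.Integrable (fun x => x * f x) ∧ (∫ x, x * f x) = μ

/-- The density `f` (with mean `μ`) has variance `σ2`. -/
def HasVar (f : ℝ → ℝ) (μ σ2 : ℝ) : Prop :=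
  MeasureTheory.Integrable (fun x => (x - μ) ^ 2 * f x) ∧ (∫ x, (x - μ) ^ 2 * f x) = σ2
/-!
The score is a posterior mean: `s_r(x) = E[-(x - y) / r² | x]` with `y ∼ f*` and
`x = y + N(0, r²)`. Jensen's inequality for `exp` under the posterior gives
`e^{a s_r(x)} f_r(x) ≤ ∫ f*(y) e^{-a (x - y) / r²} w_r(x - y) dy`, and completing the square
(`e^{-a u / r²} w_r(u) = e^{a² / (2r²)} w_r(u + a)`) shows that the right-hand side integrates to
`e^{a² / (2r²)}`. Hence `s_r` is sub-Gaussian with variance proxy `1 / r²` under `f_r`, and the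
Chernoff bound on both tails at `t = (2√2 / r) √(log (2 / δ))` gives `2 (δ / 2)⁴ ≤ δ`.
-/

open ProbabilityTheory
open scoped NNReal Convolution

theorem exp_integral_div_mul_integral_le {α : Type*} [MeasurableSpace α] {μ : Measure α}
    {p φ : α → ℝ} (hp : 0 ≤ p) (hpi : Integrable p μ) (hφp : Integrable (fun y ↦ φ y * p y) μ)
    (hexp : Integrable (fun y ↦ exp (φ y) * p y) μ) :
    exp ((∫ y, φ y * p y ∂μ) / ∫ y, p y ∂μ) * ∫ y, p y ∂μ ≤ ∫ y, exp (φ y) * p y ∂μ := by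
  set c := (∫ y, φ y * p y ∂μ) / ∫ y, p y ∂μ
  rcases eq_or_ne (∫ y, p y ∂μ) 0 with hP | hP
  · rw [hP, mul_zero]
    exact integral_nonneg fun y ↦ mul_nonneg (exp_pos _).le (hp y)
  have tangent : ∀ y, exp c * ((1 - c) * p y + φ y * p y) ≤ exp (φ y) * p y := fun y ↦
    calc exp c * ((1 - c) * p y + φ y * p y) = exp c * (φ y - c + 1) * p y := by ring
      _ ≤ exp c * exp (φ y - c) * p y := by gcongr; exacts [hp y, add_one_le_exp _]
      _ = exp (φ y) * p y := by rw [← exp_add, add_sub_cancel]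
  have hc : c * ∫ y, p y ∂μ = ∫ y, φ y * p y ∂μ := div_mul_cancel₀ _ hP
  calc exp c * ∫ y, p y ∂μ = ∫ y, exp c * ((1 - c) * p y + φ y * p y) ∂μ := by
        rw [integral_const_mul, integral_add (hpi.const_mul _) hφp, integral_const_mul]
        linear_combination exp c * hc
    _ ≤ ∫ y, exp (φ y) * p y ∂μ :=
        integral_mono (((hpi.const_mul _).add hφp).const_mul _) hexp tangent

section SubGaussian

variable {Ω : Type*} [MeasurableSpace Ω] {μ : Measure Ω} {X : Ω → ℝ} {c : ℝ≥0}

theorem ProbabilityTheory.hasSubgaussianMGF_of_lintegral_exp_le (hX : AEMeasurable X μ)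
    (h : ∀ t, ∫⁻ ω, ENNReal.ofReal (exp (t * X ω)) ∂μ ≤ ENNReal.ofReal (exp (c * t ^ 2 / 2))) :
    HasSubgaussianMGF X c μ := by
  have hint : ∀ t, Integrable (fun ω ↦ exp (t * X ω)) μ := fun t ↦
    ⟨(hX.const_mul t).exp.aestronglyMeasurable, by
      simpa only [HasFiniteIntegral, Real.enorm_of_nonneg (exp_pos _).le]
        using (h t).trans_lt ENNReal.ofReal_lt_top⟩
  refine ⟨hint, fun t ↦ ?_⟩
  rw [mgf, integral_eq_lintegral_of_nonneg_ae (ae_of_all _ fun ω ↦ (exp_pos _).le) (hint t).1]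
  exact ENNReal.toReal_le_of_le_ofReal (exp_pos _).le (h t)

theorem ProbabilityTheory.HasSubgaussianMGF.measure_lt_abs_le (h : HasSubgaussianMGF X c μ)
    {ε : ℝ} (hε : 0 ≤ ε) :
    μ {ω | ε < |X ω|} ≤ ENNReal.ofReal (2 * exp (-ε ^ 2 / (2 * c))) := by
  have : IsFiniteMeasure μ := by simpa [integrable_const_iff] using h.integrable_exp_mul 0
  calc μ {ω | ε < |X ω|} ≤ μ ({ω | ε ≤ X ω} ∪ {ω | ε ≤ (-X) ω}) :=
        measure_mono fun ω hω ↦ (lt_abs.mp hω).imp le_of_lt fun h ↦ show ε ≤ -X ω from h.le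
    _ ≤ μ {ω | ε ≤ X ω} + μ {ω | ε ≤ (-X) ω} := measure_union_le _ _
    _ = ENNReal.ofReal (μ.real {ω | ε ≤ X ω}) + ENNReal.ofReal (μ.real {ω | ε ≤ (-X) ω}) := by
        rw [ofReal_measureReal, ofReal_measureReal]
    _ ≤ ENNReal.ofReal (exp (-ε ^ 2 / (2 * c))) + ENNReal.ofReal (exp (-ε ^ 2 / (2 * c))) := by
        gcongr
        exacts [h.measure_ge_le hε, h.neg.measure_ge_le hε]
    _ = ENNReal.ofReal (2 * exp (-ε ^ 2 / (2 * c))) := by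
        rw [← ENNReal.ofReal_add (exp_pos _).le (exp_pos _).le, ← two_mul]

end SubGaussian

theorem integrable_mul_comp_sub {f g : ℝ → ℝ} {M : ℝ} (hf : Integrable f) (hg : Measurable g)
    (hgM : ∀ u, |g u| ≤ M) (x : ℝ) : Integrable (fun y ↦ f y * g (x - y)) :=
  hf.mul_bdd (hg.comp (measurable_const.sub measurable_id)).aestronglyMeasurable
    (ae_of_all _ fun y ↦ hgM (x - y))

theorem hasDerivAt_integral_mul_comp_sub {f k k' : ℝ → ℝ} {M M' : ℝ} (hf : Integrable f)
    (hk : ∀ u, HasDerivAt k (k' u) u) (hkM : ∀ u, |k u| ≤ M) (hk'M : ∀ u, |k' u| ≤ M')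
    (x : ℝ) : HasDerivAt (fun x ↦ ∫ y, f y * k (x - y)) (∫ y, f y * k' (x - y)) x := by
  have hk_meas : Measurable k :=
    (continuous_iff_continuousAt.2 fun u ↦ (hk u).continuousAt).measurable
  have hk'_meas : Measurable k' := by
    simpa only [funext fun u ↦ (hk u).deriv] using measurable_deriv k
  refine (hasDerivAt_integral_of_dominated_loc_of_deriv_le
    (F' := fun x y ↦ f y * k' (x - y)) (bound := fun y ↦ |f y| * M') univ_mem
    (Eventually.of_forall fun x' ↦
      (integrable_mul_comp_sub hf hk_meas hkM x').aestronglyMeasurable)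
    (integrable_mul_comp_sub hf hk_meas hkM x)
    (integrable_mul_comp_sub hf hk'_meas hk'M x).aestronglyMeasurable
    (ae_of_all _ fun y x' _ ↦ ?_) (hf.abs.mul_const M') (ae_of_all _ fun y x' _ ↦ ?_)).2
  · rw [norm_mul, Real.norm_eq_abs, Real.norm_eq_abs]
    exact mul_le_mul_of_nonneg_left (hk'M _) (abs_nonneg _)
  · simpa using ((hk (x' - y)).comp x' ((hasDerivAt_id x').sub_const y)).const_mul (f y)

theorem ProbabilityTheory.gaussianPDFReal_le (μ : ℝ) (v : ℝ≥0) (x : ℝ) :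
    gaussianPDFReal μ v x ≤ (√(2 * π * v))⁻¹ := by
  rw [gaussianPDFReal]
  refine mul_le_of_le_one_right (by positivity) (exp_le_one_iff.2 ?_)
  exact div_nonpos_of_nonpos_of_nonneg (neg_nonpos.2 (sq_nonneg _)) (by positivity)

theorem abs_mul_exp_neg_sq_div_two_le_one (v : ℝ) : |v| * exp (-v ^ 2 / 2) ≤ 1 := by
  have hv : |v| ≤ exp (v ^ 2 / 2) := by
    nlinarith [add_one_le_exp (v ^ 2 / 2), sq_abs v, sq_nonneg (|v| - 1)]
  calc |v| * exp (-v ^ 2 / 2) ≤ exp (v ^ 2 / 2) * exp (-v ^ 2 / 2) := by gcongr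
    _ = 1 := by rw [← exp_add, neg_div, add_neg_cancel, exp_zero]

section Gaussian

variable {r : ℝ}

theorem gaussDensity_eq_gaussianPDFReal (r : ℝ) :
    gaussDensity r = gaussianPDFReal 0 ⟨r ^ 2, sq_nonneg r⟩ := by
  ext u
  simp only [gaussDensity, gaussianPDFReal, sub_zero]
  rfl

theorem gaussDensity_nonneg (r u : ℝ) : 0 ≤ gaussDensity r u := by
  rw [gaussDensity_eq_gaussianPDFReal]
  exact gaussianPDFReal_nonneg _ _ _

theorem measurable_gaussDensity (r : ℝ) : Measurable (gaussDensity r) := by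
  rw [gaussDensity_eq_gaussianPDFReal]
  exact measurable_gaussianPDFReal _ _

theorem abs_gaussDensity_le (r u : ℝ) : |gaussDensity r u| ≤ (√(2 * π * r ^ 2))⁻¹ := by
  rw [abs_of_nonneg (gaussDensity_nonneg r u), gaussDensity_eq_gaussianPDFReal]
  exact gaussianPDFReal_le _ _ _

theorem hasDerivAt_gaussDensity (hr : r ≠ 0) (u : ℝ) :
    HasDerivAt (gaussDensity r) (-(u / r ^ 2) * gaussDensity r u) u := by
  have h := ((((hasDerivAt_pow 2 u).neg).div_const (2 * r ^ 2)).exp).const_mul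
    (√(2 * π * r ^ 2))⁻¹
  refine h.congr_deriv ?_
  simp only [gaussDensity, Pi.neg_apply]
  field_simp
  ring

theorem abs_deriv_gaussDensity_le (hr : 0 < r) (u : ℝ) :
    |-(u / r ^ 2) * gaussDensity r u| ≤ (√(2 * π * r ^ 2))⁻¹ / r := by
  have hsplit : |-(u / r ^ 2) * gaussDensity r u|
      = (√(2 * π * r ^ 2))⁻¹ / r * (|u / r| * exp (-(u / r) ^ 2 / 2)) := by
    rw [gaussDensity, abs_mul, abs_neg, abs_mul,
      abs_of_nonneg (by positivity : 0 ≤ (√(2 * π * r ^ 2))⁻¹), abs_of_pos (exp_pos _),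
      abs_div, abs_div, abs_of_pos hr, abs_of_pos (pow_pos hr 2)]
    field_simp
  rw [hsplit]
  exact mul_le_of_le_one_right (by positivity) (abs_mul_exp_neg_sq_div_two_le_one _)

noncomputable def tiltedGauss (r a u : ℝ) : ℝ :=
  exp (-(a / r ^ 2) * u) * gaussDensity r u

theorem tiltedGauss_eq (hr : r ≠ 0) (a : ℝ) :
    tiltedGauss r a =
      fun u ↦ exp (a ^ 2 / (2 * r ^ 2)) * gaussianPDFReal (-a) ⟨r ^ 2, sq_nonneg r⟩ u := by
  ext u
  simp only [tiltedGauss, gaussDensity, gaussianPDFReal]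
  change _ = _ * ((√(2 * π * r ^ 2))⁻¹ * exp (-(u - -a) ^ 2 / (2 * r ^ 2)))
  rw [mul_left_comm, ← exp_add, mul_left_comm, ← exp_add]
  congr 2
  field_simp
  ring

theorem tiltedGauss_nonneg (r a u : ℝ) : 0 ≤ tiltedGauss r a u :=
  mul_nonneg (exp_pos _).le (gaussDensity_nonneg r u)

theorem measurable_tiltedGauss (hr : r ≠ 0) (a : ℝ) : Measurable (tiltedGauss r a) := by
  rw [tiltedGauss_eq hr]
  fun_prop

theorem abs_tiltedGauss_le (hr : r ≠ 0) (a u : ℝ) :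
    |tiltedGauss r a u| ≤ exp (a ^ 2 / (2 * r ^ 2)) * (√(2 * π * r ^ 2))⁻¹ := by
  rw [abs_of_nonneg (tiltedGauss_nonneg r a u), tiltedGauss_eq hr]
  exact mul_le_mul_of_nonneg_left (gaussianPDFReal_le _ _ _) (exp_pos _).le

theorem integrable_tiltedGauss (hr : r ≠ 0) (a : ℝ) : Integrable (tiltedGauss r a) := by
  rw [tiltedGauss_eq hr]
  exact (integrable_gaussianPDFReal _ _).const_mul _

theorem integral_tiltedGauss (hr : r ≠ 0) (a : ℝ) :
    ∫ u, tiltedGauss r a u = exp (a ^ 2 / (2 * r ^ 2)) := by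
  have hv : (⟨r ^ 2, sq_nonneg r⟩ : ℝ≥0) ≠ 0 := by
    simpa [← NNReal.coe_ne_zero] using pow_ne_zero 2 hr
  rw [tiltedGauss_eq hr, integral_const_mul, integral_gaussianPDFReal_eq_one _ hv, mul_one]

end Gaussian

section Smoothed

variable {f : ℝ → ℝ} {r : ℝ}

theorem hasDerivAt_smoothed (hf : Integrable f) (hr : 0 < r) (x : ℝ) :
    HasDerivAt (smoothed f r) (∫ y, f y * (-((x - y) / r ^ 2) * gaussDensity r (x - y))) x :=
  hasDerivAt_integral_mul_comp_sub hf (hasDerivAt_gaussDensity hr.ne') (abs_gaussDensity_le r)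
    (abs_deriv_gaussDensity_le hr) x

theorem continuous_smoothed (hf : Integrable f) (hr : 0 < r) : Continuous (smoothed f r) :=
  continuous_iff_continuousAt.2 fun x ↦ (hasDerivAt_smoothed hf hr x).continuousAt

theorem measurable_score (hf : Integrable f) (hr : 0 < r) : Measurable (score f r) :=
  (measurable_deriv _).div (continuous_smoothed hf hr).measurable

theorem exp_mul_score_mul_smoothed_le (hf0 : ∀ x, 0 ≤ f x) (hf : Integrable f) (hr : 0 < r)
    (a x : ℝ) :
    exp (a * score f r x) * smoothed f r x
      ≤ (f ⋆[ContinuousLinearMap.mul ℝ ℝ] tiltedGauss r a) x := by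
  have hφp : ∫ y, -(a / r ^ 2) * (x - y) * (f y * gaussDensity r (x - y))
      = a * deriv (smoothed f r) x := by
    rw [(hasDerivAt_smoothed hf hr x).deriv, ← integral_const_mul]
    congr 1 with y
    ring
  have hjensen := exp_integral_div_mul_integral_le (μ := volume)
    (p := fun y ↦ f y * gaussDensity r (x - y)) (φ := fun y ↦ -(a / r ^ 2) * (x - y))
    (fun y ↦ mul_nonneg (hf0 y) (gaussDensity_nonneg r _))
    (integrable_mul_comp_sub hf (measurable_gaussDensity r) (abs_gaussDensity_le r) x)
    (((integrable_mul_comp_sub hf ((measurable_id.div_const _).neg.mul (measurable_gaussDensity r))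
      (abs_deriv_gaussDensity_le hr) x).const_mul a).congr
      (ae_of_all _ fun y ↦ by simp only [Pi.mul_apply, Pi.neg_apply, id]; ring))
    ((integrable_mul_comp_sub hf (measurable_tiltedGauss hr.ne' a)
      (abs_tiltedGauss_le hr.ne' a) x).congr
      (ae_of_all _ fun y ↦ by simp only [tiltedGauss]; ring))
  have hconv : (f ⋆[ContinuousLinearMap.mul ℝ ℝ] tiltedGauss r a) x
      = ∫ y, exp (-(a / r ^ 2) * (x - y)) * (f y * gaussDensity r (x - y)) := by
    rw [convolution_def]
    congr 1 with y
    simp only [ContinuousLinearMap.mul_apply', tiltedGauss]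
    ring
  rw [hconv, score, mul_div_assoc', ← hφp]
  exact hjensen

theorem lintegral_exp_mul_score_le (hf : IsDensity f) (hr : 0 < r) (a : ℝ) :
    ∫⁻ x, ENNReal.ofReal (exp (a * score f r x)) ∂densMeasure (smoothed f r)
      ≤ ENNReal.ofReal (exp (a ^ 2 / (2 * r ^ 2))) := by
  obtain ⟨hf0, hf_int, hf_one⟩ := hf
  set g := f ⋆[ContinuousLinearMap.mul ℝ ℝ] tiltedGauss r a with hg
  have hg_nonneg : ∀ x, 0 ≤ g x := fun x ↦ by
    rw [hg, convolution_def]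
    exact integral_nonneg fun y ↦ mul_nonneg (hf0 y) (tiltedGauss_nonneg r a _)
  have hg_int : Integrable g := hf_int.integrable_convolution _ (integrable_tiltedGauss hr.ne' a)
  rw [densMeasure, lintegral_withDensity_eq_lintegral_mul_non_measurable _
    (continuous_smoothed hf_int hr).measurable.ennreal_ofReal
    (ae_of_all _ fun _ ↦ ENNReal.ofReal_lt_top)]
  calc ∫⁻ x, ENNReal.ofReal (smoothed f r x) * ENNReal.ofReal (exp (a * score f r x))
      = ∫⁻ x, ENNReal.ofReal (exp (a * score f r x) * smoothed f r x) := by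
        congr 1 with x
        rw [ENNReal.ofReal_mul (exp_pos _).le, mul_comm]
    _ ≤ ∫⁻ x, ENNReal.ofReal (g x) := lintegral_mono fun x ↦
        ENNReal.ofReal_le_ofReal (exp_mul_score_mul_smoothed_le hf0 hf_int hr a x)
    _ = ENNReal.ofReal (∫ x, g x) :=
        (ofReal_integral_eq_lintegral_ofReal hg_int (ae_of_all _ hg_nonneg)).symm
    _ = ENNReal.ofReal (exp (a ^ 2 / (2 * r ^ 2))) := by
        rw [integral_convolution _ hf_int (integrable_tiltedGauss hr.ne' a), hf_one,
          integral_tiltedGauss hr.ne', ContinuousLinearMap.mul_apply', one_mul]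

theorem hasSubgaussianMGF_score (hf : IsDensity f) (hr : 0 < r) :
    HasSubgaussianMGF (score f r) (r ^ 2)⁻¹.toNNReal (densMeasure (smoothed f r)) :=
  hasSubgaussianMGF_of_lintegral_exp_le (measurable_score hf.2.1 hr).aemeasurable fun t ↦ by
    rw [Real.coe_toNNReal _ (by positivity)]
    convert lintegral_exp_mul_score_le hf hr t using 3
    field_simp

end Smoothed

/-- Score is `O(1/r)`-subgaussian: there is a universal constant `C > 0`
(in particular `C = 2√2` works) such that for every `δ ∈ (0,1)`, the probability under
`x ∼ f_r` that `|s_r(x)| > (C/r)·√(log(2/δ))` is at most `δ`. -/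
theorem score_subgaussian :
    ∃ C : ℝ, 0 < C ∧ C = 2 * Real.sqrt 2 ∧
      ∀ (fStar : ℝ → ℝ) (r : ℝ), 0 < r → IsDensity fStar →
        ∀ δ : ℝ, 0 < δ → δ < 1 →
          densMeasure (smoothed fStar r)
            {x | (C / r) * Real.sqrt (Real.log (2 / δ)) < |score fStar r x|}
            ≤ ENNReal.ofReal δ := by
  refine ⟨2 * √2, by positivity, rfl, fun f r hr hf δ hδ0 hδ1 ↦ ?_⟩
  have hL : 0 < log (2 / δ) := log_pos ((one_lt_div hδ0).2 (by linarith))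
  refine ((hasSubgaussianMGF_score hf hr).measure_lt_abs_le (by positivity)).trans
    (ENNReal.ofReal_le_ofReal ?_)
  have hexponent :
      -(2 * √2 / r * √(log (2 / δ))) ^ 2 / (2 * (r ^ 2)⁻¹) = (4 : ℕ) * log (δ / 2) := by
    rw [← inv_div 2 δ, log_inv, mul_pow, div_pow, mul_pow, sq_sqrt zero_le_two, sq_sqrt hL.le]
    field_simp
    ring
  rw [Real.coe_toNNReal _ (by positivity), hexponent, ← log_pow, exp_log (by positivity)]
  nlinarith [pow_le_of_le_one hδ0.le hδ1.le (by norm_num : (4 : ℕ) ≠ 0)]
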